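/- arXiv:0806.4712 — 2 statements merged into one kernel-verified Lean document; each statement's English description precedes it below -/
import Mathlib

section
/- For every δ > 0 there exists a constant C > 0 such that the following holds. Let H be a complex Hilbert space, let p and q be orthogonal projections on H with p·q = 0, let w be a partial isometry with w*·w = p and w·w* = q, let u and v be unitary operators on H with u·v = v·u, and let t > 0 satisfy ‖p·v − v·p‖ ≤ t. Define U = p·u·p + √(p − p·u·p·u*·p)·w* + w·√(p − p·u*·p·u·p) − w·(p·u*·p)·w* and V = p·v·p + w·v·w*. Then ‖U·V − V·U‖ ≤ C·t + δ. -/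
/-!
Write `a = p u p`, `b = p v p`, `s = √(p - a a*)`, `s' = √(p - a* a)`. From `w* w = p` and
`p w = 0` we get `w = w p`, and `s w = 0` because `(s w)* (s w) = w* (p - a a*) w = 0`; these
orthogonality relations collapse the commutator to
`[U, V] = [a, b] + [s, b] w* + w [s', b] - w [a*, b] w*`.
Compressing the commuting pair `u, v` to the corner `p` costs `2 ‖[p, v]‖`, so `[a, b]`, `[a*, b]`
and `[p - a a*, b]` are `O(t)`. For the square roots, a Weierstrass polynomial `g` uniformly close
to `√` on `[-1, 1]` satisfies `‖[g(x), b]‖ ≤ L(g) ‖[x, b]‖` for contractions `x`, so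
`‖[√x, b]‖ ≤ δ/2 + L(g) ‖[x, b]‖` with `L(g)` independent of everything but `δ`.
-/

open Polynomial Finset

section NormedRing

variable {A : Type*} [NormedRing A]

lemma norm_mul_le_of_norm_le_one_left {x : A} (hx : ‖x‖ ≤ 1) (y : A) : ‖x * y‖ ≤ ‖y‖ :=
  (norm_mul_le x y).trans (mul_le_of_le_one_left (norm_nonneg y) hx)

lemma norm_mul_le_of_norm_le_one_right {x : A} (hx : ‖x‖ ≤ 1) (y : A) : ‖y * x‖ ≤ ‖y‖ :=
  (norm_mul_le y x).trans (mul_le_of_le_one_right (norm_nonneg y) hx)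

lemma norm_mul_mul_le_of_norm_le_one {x y : A} (hx : ‖x‖ ≤ 1) (hy : ‖y‖ ≤ 1) (z : A) :
    ‖x * z * y‖ ≤ ‖z‖ :=
  (norm_mul_le_of_norm_le_one_right hy _).trans (norm_mul_le_of_norm_le_one_left hx z)

lemma norm_pow_mul_le {x : A} (hx : ‖x‖ ≤ 1) (y : A) (n : ℕ) : ‖x ^ n * y‖ ≤ ‖y‖ := by
  induction n with
  | zero => simp
  | succ n ih => rw [pow_succ', mul_assoc]; exact (norm_mul_le_of_norm_le_one_left hx _).trans ih

lemma norm_lie_pow_le {x : A} (hx : ‖x‖ ≤ 1) (b : A) (n : ℕ) :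
    ‖⁅x ^ n, b⁆‖ ≤ n * ‖⁅x, b⁆‖ := by
  induction n with
  | zero => simp [Ring.lie_def]
  | succ n ih =>
    have h : ⁅x ^ (n + 1), b⁆ = x ^ n * ⁅x, b⁆ + ⁅x ^ n, b⁆ * x := by
      simp only [Ring.lie_def, pow_succ]; noncomm_ring
    calc ‖⁅x ^ (n + 1), b⁆‖ ≤ ‖⁅x, b⁆‖ + ‖⁅x ^ n, b⁆‖ := by
          rw [h]
          exact norm_add_le_of_le (norm_pow_mul_le hx _ n) (norm_mul_le_of_norm_le_one_right hx _)
      _ ≤ ‖⁅x, b⁆‖ + n * ‖⁅x, b⁆‖ := by gcongr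
      _ = (n + 1 : ℕ) * ‖⁅x, b⁆‖ := by push_cast; ring

lemma norm_lie_aeval_le [NormedAlgebra ℝ A] {x : A} (hx : ‖x‖ ≤ 1) (g : ℝ[X]) (b : A) :
    ‖⁅aeval x g, b⁆‖ ≤ (∑ i ∈ range (g.natDegree + 1), |g.coeff i| * i) * ‖⁅x, b⁆‖ := by
  have h : ⁅aeval x g, b⁆ = ∑ i ∈ range (g.natDegree + 1), g.coeff i • ⁅x ^ i, b⁆ := by
    simp only [aeval_eq_sum_range, Ring.lie_def, sum_mul, mul_sum, ← sum_sub_distrib,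
      smul_mul_assoc, mul_smul_comm, smul_sub]
  rw [h, sum_mul]
  refine (norm_sum_le _ _).trans (sum_le_sum fun i _ => ?_)
  rw [norm_smul, Real.norm_eq_abs, mul_assoc]
  gcongr
  exact norm_lie_pow_le hx b i

lemma lie_corner_corner {p u v : A} (hp : IsIdempotentElem p) (huv : Commute u v) :
    ⁅p * u * p, p * v * p⁆ = p * u * ⁅p, v⁆ * p + p * ⁅p, v⁆ * u * p := by
  have huv' : ∀ z, u * (v * z) = v * (u * z) := fun z => by rw [← mul_assoc, huv.eq, mul_assoc]
  simp only [Ring.lie_def, mul_sub, sub_mul, mul_assoc, hp.mul_self_mul, hp.eq, huv']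
  abel

lemma norm_lie_corner_le {p u v : A} (hp : IsIdempotentElem p) (hp1 : ‖p‖ ≤ 1) (hu : ‖u‖ ≤ 1)
    (huv : Commute u v) : ‖⁅p * u * p, p * v * p⁆‖ ≤ 2 * ‖⁅p, v⁆‖ := by
  have hpu : ‖p * u‖ ≤ 1 := (norm_mul_le_of_norm_le_one_left hp1 u).trans hu
  have hup : ‖u * p‖ ≤ 1 := (norm_mul_le_of_norm_le_one_right hp1 u).trans hu
  rw [lie_corner_corner hp huv, two_mul, mul_assoc (p * ⁅p, v⁆)]
  exact norm_add_le_of_le (norm_mul_mul_le_of_norm_le_one hpu hp1 _)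
    (norm_mul_mul_le_of_norm_le_one hp1 hup _)

lemma lie_sub_corner_mul_corner {p c c' v : A} (hp : IsIdempotentElem p) :
    ⁅p - p * c * p * c' * p, p * v * p⁆ =
      -(p * c * p * ⁅p * c' * p, p * v * p⁆ + ⁅p * c * p, p * v * p⁆ * (p * c' * p)) := by
  simp only [Ring.lie_def, mul_sub, sub_mul, mul_assoc, hp.mul_self_mul, hp.eq]
  abel

lemma norm_lie_sub_corner_mul_corner_le {p c c' v : A} (hp : IsIdempotentElem p) (hp1 : ‖p‖ ≤ 1)
    (hc : ‖c‖ ≤ 1) (hc' : ‖c'‖ ≤ 1) (hcv : Commute c v) (hc'v : Commute c' v) :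
    ‖⁅p - p * c * p * c' * p, p * v * p⁆‖ ≤ 4 * ‖⁅p, v⁆‖ := by
  have hcorner : ∀ {d : A}, ‖d‖ ≤ 1 → ‖p * d * p‖ ≤ 1 := fun hd =>
    (norm_mul_mul_le_of_norm_le_one hp1 hp1 _).trans hd
  rw [lie_sub_corner_mul_corner hp, norm_neg]
  calc _ ≤ 2 * ‖⁅p, v⁆‖ + 2 * ‖⁅p, v⁆‖ := norm_add_le_of_le
          ((norm_mul_le_of_norm_le_one_left (hcorner hc) _).trans
            (norm_lie_corner_le hp hp1 hc' hc'v))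
          ((norm_mul_le_of_norm_le_one_right (hcorner hc') _).trans
            (norm_lie_corner_le hp hp1 hc hcv))
    _ = 4 * ‖⁅p, v⁆‖ := by ring

end NormedRing

lemma Commute.star_left_of_mem_unitary {R : Type*} [Monoid R] [StarMul R] {u v : R}
    (hu : u ∈ unitary R) (h : Commute u v) : Commute (star u) v :=
  calc star u * v = star u * v * (u * star u) := by rw [Unitary.mul_star_self_of_mem hu, mul_one]
    _ = star u * (u * v) * star u := by rw [h.eq]; simp only [mul_assoc]
    _ = v * star u := by rw [← mul_assoc, Unitary.star_mul_self_of_mem hu, one_mul]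

lemma lie_dilation {R : Type*} [Ring R] {a a' s s' b w w' : R}
    (haw : a * w = 0) (hwa : w' * a = 0) (hbw : b * w = 0) (hwb : w' * b = 0)
    (hws : w' * s = 0) (hs'w : s' * w = 0) (hb : w' * w * b = b) (hb' : b * (w' * w) = b) :
    ⁅a + s * w' + w * s' - w * a' * w', b + w * b * w'⁆ =
      ⁅a, b⁆ + ⁅s, b⁆ * w' + w * ⁅s', b⁆ - w * ⁅a', b⁆ * w' := by
  have hb₁ : ∀ z, w' * (w * (b * z)) = b * z := fun z => by rw [← mul_assoc, ← mul_assoc, hb]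
  have hb₂ : ∀ z, b * (w' * (w * z)) = b * z := fun z => by
    rw [← mul_assoc w', ← mul_assoc, hb']
  have h₀ : ∀ {x y : R}, x * y = 0 → ∀ z, x * (y * z) = 0 := fun h z => by
    rw [← mul_assoc, h, zero_mul]
  simp only [Ring.lie_def, mul_add, add_mul, mul_sub, sub_mul, mul_assoc, hb₁, hb₂, h₀ haw,
    h₀ hbw, h₀ hws, h₀ hs'w, hwa, hwb, mul_zero]
  abel

section CStarAlgebra

variable {A : Type*} [CStarAlgebra A]

lemma norm_cfc_sub_aeval_le {f : ℝ → ℝ} {x : A} (hx : IsSelfAdjoint x) {g : ℝ[X]} {ε : ℝ}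
    (hε : 0 ≤ ε) (hf : ContinuousOn f (spectrum ℝ x))
    (hfg : ∀ r ∈ spectrum ℝ x, |f r - g.eval r| ≤ ε) :
    ‖cfc f x - aeval x g‖ ≤ ε := by
  rw [← cfc_polynomial g x, ← cfc_sub f _ x]
  exact norm_cfc_le hε hfg

lemma spectrum_subset_Icc_of_norm_le_one {x : A} (hx : ‖x‖ ≤ 1) :
    spectrum ℝ x ⊆ Set.Icc (-1) 1 := fun r hr => by
  rw [Set.mem_Icc, ← abs_le, ← Real.norm_eq_abs]
  exact (spectrum.norm_le_norm_mul_of_mem hr).trans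
    (mul_le_one₀ hx (norm_nonneg _) (IsStarProjection.one A).norm_le)

theorem exists_norm_lie_cfc_le {f : ℝ → ℝ} (hf : ContinuousOn f (Set.Icc (-1) 1))
    {ε : ℝ} (hε : 0 < ε) :
    ∃ L : ℝ, 0 ≤ L ∧ ∀ (A : Type*) [CStarAlgebra A] (x b : A), IsSelfAdjoint x → ‖x‖ ≤ 1 →
      ‖b‖ ≤ 1 → ‖⁅cfc f x, b⁆‖ ≤ ε + L * ‖⁅x, b⁆‖ := by
  obtain ⟨g, hg⟩ := exists_polynomial_near_of_continuousOn (-1) 1 f hf (ε / 2) (by positivity)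
  refine ⟨∑ i ∈ range (g.natDegree + 1), |g.coeff i| * i, by positivity, ?_⟩
  intro A _ x b hx hx1 hb
  have hspec := spectrum_subset_Icc_of_norm_le_one hx1
  have happrox : ‖cfc f x - aeval x g‖ ≤ ε / 2 :=
    norm_cfc_sub_aeval_le hx (by positivity) (hf.mono hspec) fun r hr => by
      rw [abs_sub_comm]; exact (hg r (hspec hr)).le
  have hsplit : ⁅cfc f x, b⁆ = ⁅cfc f x - aeval x g, b⁆ + ⁅aeval x g, b⁆ := by
    simp only [Ring.lie_def]; noncomm_ring
  calc ‖⁅cfc f x, b⁆‖ ≤ ‖⁅cfc f x - aeval x g, b⁆‖ + ‖⁅aeval x g, b⁆‖ := by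
        rw [hsplit]; exact norm_add_le _ _
    _ ≤ (ε / 2 + ε / 2) + (∑ i ∈ range (g.natDegree + 1), |g.coeff i| * i) * ‖⁅x, b⁆‖ := by
        gcongr
        · rw [Ring.lie_def]
          exact norm_sub_le_of_le ((norm_mul_le_of_norm_le_one_right hb _).trans happrox)
            ((norm_mul_le_of_norm_le_one_left hb _).trans happrox)
        · exact norm_lie_aeval_le hx1 g b
    _ = ε + _ := by ring

lemma mul_star_mul_self_of_isStarProjection {w : A} (hw : IsStarProjection (star w * w)) :
    w * (star w * w) = w := by
  have h : star (w * (star w * w) - w) * (w * (star w * w) - w) =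
      (star w * w) * (star w * w) * (star w * w) - (star w * w) * (star w * w)
        - (star w * w) * (star w * w) + star w * w := by
    simp only [star_sub, star_mul, star_star]; noncomm_ring
  simp only [hw.isIdempotentElem.eq, sub_self, zero_sub, neg_add_cancel] at h
  exact sub_eq_zero.mp (CStarRing.star_mul_self_eq_zero_iff _ |>.mp h)

lemma norm_le_one_of_isStarProjection_star_mul_self {w : A}
    (hw : IsStarProjection (star w * w)) : ‖w‖ ≤ 1 := by
  have h := hw.norm_le
  rw [CStarRing.norm_star_mul_self] at h
  nlinarith [norm_nonneg w]

lemma mul_corner_mul_star_eq {p w : A} (hp : IsStarProjection p) (hw : star w * w = p) (v : A) :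
    w * (p * v * p) * star w = w * v * star w := by
  have hwp : w * p = w := hw ▸ mul_star_mul_self_of_isStarProjection (hw ▸ hp)
  have hpw : p * star w = star w := by simpa [hp.isSelfAdjoint.star_eq] using congr(star $hwp)
  rw [← mul_assoc, ← mul_assoc, hwp, mul_assoc _ p, hpw]

lemma norm_le_one_of_mem_unitary {u : A} (hu : u ∈ unitary A) : ‖u‖ ≤ 1 :=
  norm_le_one_of_isStarProjection_star_mul_self
    (by rw [Unitary.star_mul_self_of_mem hu]; exact IsStarProjection.one A)

variable [PartialOrder A] [StarOrderedRing A]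

lemma cfc_sqrt_mul_self {x : A} (hx : 0 ≤ x) : cfc Real.sqrt x * cfc Real.sqrt x = x := by
  rw [← cfcₙ_eq_cfc, ← CFC.sqrt_eq_real_sqrt x hx, CFC.sqrt_mul_sqrt_self x hx]

lemma cfc_sqrt_mul_eq_zero {x y : A} (hx : 0 ≤ x) (hxy : x * y = 0) :
    cfc Real.sqrt x * y = 0 := by
  refine (CStarRing.star_mul_self_eq_zero_iff _).mp ?_
  rw [star_mul, (cfc_predicate Real.sqrt x).star_eq, mul_assoc, ← mul_assoc (cfc _ x),
    cfc_sqrt_mul_self hx, hxy, mul_zero]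

section Defect

variable {p c : A}

lemma corner_mul_star_le (hp : IsStarProjection p) (hc : c ∈ unitary A) :
    p * c * p * star c * p ≤ p := by
  have h := star_right_conjugate_le_conjugate (sub_nonneg.mp hp.one_sub.nonneg) (p * c)
  have hcc : ∀ z, c * (star c * z) = z := fun z => by
    rw [← mul_assoc, Unitary.mul_star_self_of_mem hc, one_mul]
  simpa [star_mul, hp.isSelfAdjoint.star_eq, mul_assoc, hcc, hp.isIdempotentElem.eq] using h

lemma sub_corner_mul_star_nonneg (hp : IsStarProjection p) (hc : c ∈ unitary A) :
    0 ≤ p - p * c * p * star c * p :=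
  sub_nonneg.mpr (corner_mul_star_le hp hc)

lemma norm_sub_corner_mul_star_le_one (hp : IsStarProjection p) (hc : c ∈ unitary A) :
    ‖p - p * c * p * star c * p‖ ≤ 1 := by
  have h : p * c * p * star c * p = p * c * p * star (p * c * p) := by
    simp [star_mul, hp.isSelfAdjoint.star_eq, mul_assoc, hp.isIdempotentElem.mul_self_mul]
  refine (CStarAlgebra.norm_le_norm_of_nonneg_of_le (sub_corner_mul_star_nonneg hp hc)
    (sub_le_self _ ?_)).trans (hp.norm_le p)
  rw [h]; exact mul_star_self_nonneg _

lemma cfc_sqrt_sub_corner_mul_star_mul_eq_zero (hp : IsStarProjection p) (hc : c ∈ unitary A)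
    {w : A} (hpw : p * w = 0) :
    cfc Real.sqrt (p - p * c * p * star c * p) * w = 0 :=
  cfc_sqrt_mul_eq_zero (sub_corner_mul_star_nonneg hp hc) (by simp [sub_mul, mul_assoc, hpw])

lemma norm_lie_cfc_sqrt_sub_corner_mul_star_le (hp : IsStarProjection p) (hc : c ∈ unitary A)
    {ε L : ℝ} (hL : ∀ x b : A, IsSelfAdjoint x →
      ‖x‖ ≤ 1 → ‖b‖ ≤ 1 → ‖⁅cfc Real.sqrt x, b⁆‖ ≤ ε + L * ‖⁅x, b⁆‖) (hL0 : 0 ≤ L)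
    {v : A} (hv : ‖v‖ ≤ 1) (hcv : Commute c v) :
    ‖⁅cfc Real.sqrt (p - p * c * p * star c * p), p * v * p⁆‖ ≤ ε + 4 * L * ‖⁅p, v⁆‖ := by
  have hp1 := hp.norm_le p
  have hc1 := norm_le_one_of_mem_unitary hc
  calc _ ≤ ε + L * ‖⁅p - p * c * p * star c * p, p * v * p⁆‖ :=
        hL _ _ (sub_corner_mul_star_nonneg hp hc).isSelfAdjoint
          (norm_sub_corner_mul_star_le_one hp hc)
          ((norm_mul_mul_le_of_norm_le_one hp1 hp1 v).trans hv)
    _ ≤ ε + L * (4 * ‖⁅p, v⁆‖) := by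
        gcongr
        exact norm_lie_sub_corner_mul_corner_le hp.isIdempotentElem hp1 hc1
          (by rwa [norm_star]) hcv (hcv.star_left_of_mem_unitary hc)
    _ = ε + 4 * L * ‖⁅p, v⁆‖ := by ring

end Defect

theorem norm_lie_dilation_le {ε L : ℝ} (hL : ∀ x b : A, IsSelfAdjoint x →
      ‖x‖ ≤ 1 → ‖b‖ ≤ 1 → ‖⁅cfc Real.sqrt x, b⁆‖ ≤ ε + L * ‖⁅x, b⁆‖) (hL0 : 0 ≤ L)
    {p w u v : A} (hp : IsStarProjection p) (hw : star w * w = p) (hpw : p * w = 0)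
    (hu : u ∈ unitary A) (hv : v ∈ unitary A) (huv : Commute u v) :
    ‖⁅p * u * p + cfc Real.sqrt (p - p * u * p * star u * p) * star w
        + w * cfc Real.sqrt (p - p * star u * p * u * p) - w * (p * star u * p) * star w,
      p * v * p + w * v * star w⁆‖ ≤ (8 * L + 4) * ‖⁅p, v⁆‖ + 2 * ε := by
  have hp1 := hp.norm_le p
  have hw1 : ‖w‖ ≤ 1 := norm_le_one_of_isStarProjection_star_mul_self (hw ▸ hp)
  have hw1' : ‖star w‖ ≤ 1 := by rwa [norm_star]
  have hwp' : star w * p = 0 := by simpa [hp.isSelfAdjoint.star_eq] using congr(star $hpw)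
  have hu' := Unitary.star_mem hu
  have hu'v := huv.star_left_of_mem_unitary hu
  have hv1 := norm_le_one_of_mem_unitary hv
  set s := cfc Real.sqrt (p - p * u * p * star u * p)
  set s' := cfc Real.sqrt (p - p * star u * p * u * p)
  have hs : s * w = 0 := cfc_sqrt_sub_corner_mul_star_mul_eq_zero hp hu hpw
  have hs' : s' * w = 0 := by simpa using cfc_sqrt_sub_corner_mul_star_mul_eq_zero hp hu' hpw
  have hws : star w * s = 0 := by
    have hs_sa : IsSelfAdjoint s := cfc_predicate _ _
    simpa [hs_sa.star_eq] using congr(star $hs)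
  rw [← mul_corner_mul_star_eq hp hw v, lie_dilation (by simp [mul_assoc, hpw]) (by simp [← mul_assoc, hwp'])
    (by simp [mul_assoc, hpw]) (by simp [← mul_assoc, hwp']) hws hs'
    (by rw [hw, ← mul_assoc, ← mul_assoc, hp.isIdempotentElem.eq])
    (by rw [hw, mul_assoc, hp.isIdempotentElem.eq])]
  have ha := norm_lie_corner_le hp.isIdempotentElem hp1 (norm_le_one_of_mem_unitary hu) huv
  have ha' := norm_lie_corner_le hp.isIdempotentElem hp1 (norm_le_one_of_mem_unitary hu') hu'v
  have hsb := norm_lie_cfc_sqrt_sub_corner_mul_star_le hp hu hL hL0 hv1 huv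
  have hs'b : ‖⁅s', p * v * p⁆‖ ≤ ε + 4 * L * ‖⁅p, v⁆‖ := by
    simpa using norm_lie_cfc_sqrt_sub_corner_mul_star_le hp hu' hL hL0 hv1 hu'v
  refine (norm_sub_le _ _).trans ?_
  linarith [norm_add₃_le (a := ⁅p * u * p, p * v * p⁆) (b := ⁅s, p * v * p⁆ * star w)
    (c := w * ⁅s', p * v * p⁆), norm_mul_le_of_norm_le_one_right hw1' ⁅s, p * v * p⁆,
    norm_mul_le_of_norm_le_one_left hw1 ⁅s', p * v * p⁆,
    norm_mul_mul_le_of_norm_le_one hw1 hw1' ⁅p * star u * p, p * v * p⁆]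

end CStarAlgebra

/-- For every `δ > 0` there is a constant `C > 0` such that for all complex Hilbert spaces `H`,
mutually orthogonal projections `p, q` with partial isometry `w` (`w*w = p`, `ww* = q`),
commuting unitaries `u, v`, and `t > 0` with `‖p·v − v·p‖ ≤ t`, the elements
`U = p·u·p + √(p − p·u·p·u*·p)·w* + w·√(p − p·u*·p·u·p) − w·(p·u*·p)·w*` and
`V = p·v·p + w·v·w*` satisfy `‖U·V − V·U‖ ≤ C·t + δ`. -/
theorem almost_commuting_corner_bound (δ : ℝ) (hδ : 0 < δ) :
    ∃ C : ℝ, 0 < C ∧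
      ∀ (H : Type) [NormedAddCommGroup H] [InnerProductSpace ℂ H] [CompleteSpace H]
        (u v p q w : H →L[ℂ] H),
        p * q = 0 →
        IsSelfAdjoint p → IsIdempotentElem p →
        IsSelfAdjoint q → IsIdempotentElem q →
        star w * w = p → w * star w = q →
        u ∈ unitary (H →L[ℂ] H) → v ∈ unitary (H →L[ℂ] H) →
        u * v = v * u →
        ∀ t : ℝ, 0 < t → ‖p * v - v * p‖ ≤ t →
          let U : H →L[ℂ] H :=
            p * u * p + cfc Real.sqrt (p - p * u * p * star u * p) * star w
              + w * cfc Real.sqrt (p - p * star u * p * u * p) - w * (p * star u * p) * star w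
          let V : H →L[ℂ] H := p * v * p + w * v * star w
          ‖U * V - V * U‖ ≤ C * t + δ := by
  obtain ⟨L, hL0, hL⟩ :=
    exists_norm_lie_cfc_le Real.continuous_sqrt.continuousOn (half_pos hδ)
  refine ⟨8 * L + 4, by positivity, ?_⟩
  intro H _ _ _ u v p q w hpq hp hp2 _ _ hw hwq hu hv huv t _ ht U V
  have hP : IsStarProjection p := ⟨hp2, hp⟩
  have hpw : p * w = 0 :=
    calc p * w = p * (w * (star w * w)) := by
          rw [mul_star_mul_self_of_isStarProjection (hw ▸ hP)]
      _ = p * (w * star w) * w := by simp only [mul_assoc]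
      _ = 0 := by rw [hwq, hpq, zero_mul]
  have h := norm_lie_dilation_le (hL (H →L[ℂ] H)) hL0 hP hw hpw hu hv huv
  rw [Ring.lie_def, Ring.lie_def] at h
  calc ‖U * V - V * U‖ ≤ (8 * L + 4) * ‖p * v - v * p‖ + 2 * (δ / 2) := h
    _ ≤ (8 * L + 4) * t + δ := by nlinarith
end

section
/- Let n ≥ 1, let F be the free group on generators g_1, …, g_n, let S_n = Equiv.Perm (Fin n) act on F by the homomorphism α : S_n → Aut(F) with α(σ)(g_i) = g_{σ(i)}, and form the semidirect product F ⋊_α S_n. Let g = (g_1·g_2·⋯·g_n)^3 ∈ F. Then the group homomorphism from the free product ℤ ∗ S_n to F ⋊_α S_n determined by sending the generator 1 of ℤ to the element (g, 1) and sending each σ ∈ S_n to (1, σ) is injective. In particular, the cyclic subgroup generated by g and the subgroup S_n are free in F ⋊_α S_n. -/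
/-- The homomorphism `α` from `Equiv.Perm (Fin n)` into the automorphism group of
`FreeGroup (Fin n)` determined by `α(σ)(gᵢ) = g_{σ(i)}`. -/
def permAut (n : ℕ) : Equiv.Perm (Fin n) →* MulAut (FreeGroup (Fin n)) where
  toFun σ := FreeGroup.freeGroupCongr σ
  map_one' := FreeGroup.freeGroupCongr_refl
  map_mul' σ τ := (FreeGroup.freeGroupCongr_trans τ σ).symm

/-- `g = (g₁ · g₂ · ⋯ · gₙ)³` in the free group on `g₁, …, gₙ`. -/
def gWord (n : ℕ) : FreeGroup (Fin n) :=
  ((List.ofFn fun i : Fin n => FreeGroup.of i).prod) ^ 3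

/-!
Write `w = g₁ ⋯ gₙ`, so that `g = w³`, and let `F ⋊ Sₙ` act on `F` by
`(a, σ) • x = a · α(σ)(x)`. Let `X` be the set of elements whose reduced word begins with `w` or
`w⁻¹`, and `Y` its complement. A permutation renames the letters of a reduced word without
creating cancellation, and renaming by `σ ≠ 1` turns `w` (resp. `w⁻¹`) into a word of the same
length that is neither `w` nor `w⁻¹` (compare letters, resp. exponent signs); so `σ • X ⊆ Y`.
Conversely, in `g^k x = w^{3k} x` with `k ≠ 0` and `x ∈ Y`, fewer than `n` letters cancel because
`x` does not begin with `w^{∓1}`, and `|3k| ≥ 2` leaves a whole `w^{±1}` at the front; so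
`g^k • Y ⊆ X`. The ping-pong lemma concludes.
-/

namespace FreeGroup

variable {α β : Type*}

theorem IsCyclicallyReduced.invRev {L : List (α × Bool)} (h : IsCyclicallyReduced L) :
    IsCyclicallyReduced (invRev L) := by
  refine ⟨?_, ?_⟩
  · unfold FreeGroup.invRev
    rw [IsReduced, List.isChain_reverse, List.isChain_map]
    exact h.isReduced.imp fun a b hab heq => by simpa using (hab heq.symm).symm
  · simp only [FreeGroup.invRev, List.getLast?_reverse, List.head?_reverse, List.head?_map,
      List.getLast?_map, Option.mem_def, Option.map_eq_some_iff]
    rintro _ ⟨a, ha, rfl⟩ _ ⟨b, hb, rfl⟩ heq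
    simpa using (h.2 b hb a ha heq.symm).symm

theorem isCyclicallyReduced_of_forall_snd_eq {L : List (α × Bool)} {b : Bool}
    (h : ∀ p ∈ L, p.2 = b) : IsCyclicallyReduced L := by
  refine ⟨List.Pairwise.isChain (List.pairwise_of_forall_mem_list fun p hp q hq _ => ?_), ?_⟩
  · rw [h p hp, h q hq]
  · intro p hp q hq _
    rw [h p (List.mem_of_getLast? hp), h q (List.mem_of_head? hq)]

theorem invRev_map (f : α → β) (L : List (α × Bool)) :
    invRev (L.map fun p => (f p.1, p.2)) = (invRev L).map fun p => (f p.1, p.2) := by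
  simp [invRev, List.map_reverse]

theorem isReduced_map {f : α → β} (hf : Function.Injective f) {L : List (α × Bool)}
    (h : IsReduced L) : IsReduced (L.map fun p => (f p.1, p.2)) := by
  rw [IsReduced, List.isChain_map]
  exact h.imp fun a b hab heq => hab (hf heq)

variable [DecidableEq α]

theorem IsReduced.exists_reduce_append {L₁ L₂ : List (α × Bool)} (h₁ : IsReduced L₁)
    (h₂ : IsReduced L₂) :
    ∃ a c b, L₁ = a ++ c ∧ L₂ = invRev c ++ b ∧ reduce (L₁ ++ L₂) = a ++ b := by
  induction L₁ with
  | nil => exact ⟨[], [], L₂, rfl, by simp [invRev], by simpa using h₂.reduce_eq⟩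
  | cons x M ih =>
    obtain ⟨a, c, b, rfl, rfl, hred⟩ := ih (h₁.infix (List.suffix_cons x _).isInfix)
    rw [List.cons_append, reduce.cons, hred]
    rcases a with _ | ⟨y, a⟩
    · rcases b with _ | ⟨y, b⟩
      · exact ⟨[x], c, [], by simp, by simp, rfl⟩
      · dsimp only [List.nil_append]
        split_ifs with hxy
        · obtain ⟨h1, h2⟩ := hxy
          exact ⟨[], x :: c, b, rfl, by simp [invRev, h1, h2], rfl⟩
        · exact ⟨[x], c, y :: b, rfl, rfl, rfl⟩
    · have hxy : ¬(x.1 = y.1 ∧ x.2 = !y.2) := by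
        rintro ⟨h1, h2⟩
        simpa [h2] using (isReduced_cons_cons.mp h₁).1 h1
      simp only [List.cons_append, if_neg hxy]
      exact ⟨x :: y :: a, c, b, rfl, rfl, rfl⟩

/-- Less than all of `s` cancels in `x * y`, so `p` survives. -/
theorem prefix_toWord_mul {x y : FreeGroup α} {p s : List (α × Bool)} (hx : x.toWord = p ++ s)
    (hy : ¬invRev s <+: y.toWord) : p <+: (x * y).toWord := by
  obtain ⟨a, c, b, hac, hcb, hred⟩ :=
    isReduced_toWord.exists_reduce_append (isReduced_toWord (x := y))
  rw [toWord_mul, hred]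
  have hcs : c.length < s.length := by
    by_contra! hle
    obtain ⟨d, rfl⟩ := List.suffix_of_suffix_length_le (hx ▸ List.suffix_append p s)
      (hac ▸ List.suffix_append a c) hle
    exact hy ⟨invRev d ++ b, by rw [hcb, invRev_append, List.append_assoc]⟩
  have hlen : p.length + s.length = a.length + c.length := by
    simpa [hac] using congrArg List.length hx.symm
  have hpa : p <+: a := List.prefix_of_prefix_length_le (hx ▸ List.prefix_append p s)
    (hac ▸ List.prefix_append a c) (by omega)
  exact hpa.trans (List.prefix_append a b)

theorem prefix_toWord_pow_mul {x y : FreeGroup α} (hy : IsCyclicallyReduced y.toWord) {m : ℕ}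
    (hm : 2 ≤ m) (hx : ¬invRev y.toWord <+: x.toWord) : y.toWord <+: (y ^ m * x).toWord := by
  obtain ⟨k, rfl⟩ := Nat.exists_eq_add_of_le' hm
  set u := y.toWord
  have hpow : (y ^ (k + 2)).toWord = u ++ ((List.replicate k u).flatten ++ u) := by
    rw [toWord_pow, (hy.flatten_replicate _).isReduced.reduce_eq, List.replicate_succ,
      List.replicate_succ']
    simp
  refine prefix_toWord_mul hpow fun h => hx (List.IsPrefix.trans ?_ h)
  rw [invRev_append]
  exact List.prefix_append _ _

theorem prefix_toWord_zpow_mul {x y : FreeGroup α} (hy : IsCyclicallyReduced y.toWord) {k : ℤ}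
    (hk : 2 ≤ |k|) (hx₁ : ¬y.toWord <+: x.toWord) (hx₂ : ¬invRev y.toWord <+: x.toWord) :
    y.toWord <+: (y ^ k * x).toWord ∨ invRev y.toWord <+: (y ^ k * x).toWord := by
  obtain ⟨m, rfl | rfl⟩ := Int.eq_nat_or_neg k
  · left
    rw [zpow_natCast]
    exact prefix_toWord_pow_mul hy (by simpa using hk) hx₂
  · right
    rw [zpow_neg, zpow_natCast, ← inv_pow, ← toWord_inv]
    refine prefix_toWord_pow_mul (by simpa using hy.invRev) (by simpa using hk) ?_
    simpa [invRev_invRev] using hx₁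

theorem toWord_map [DecidableEq β] {f : α → β} (hf : Function.Injective f) (x : FreeGroup α) :
    (map f x).toWord = x.toWord.map fun p => (f p.1, p.2) := by
  conv_lhs => rw [← mk_toWord (x := x)]
  rw [map.mk, toWord_mk, (isReduced_map hf isReduced_toWord).reduce_eq]

end FreeGroup

namespace SemidirectProduct

variable {N G : Type*} [Group N] [Group G] {φ : G →* MulAut N}

instance : MulAction (N ⋊[φ] G) N where
  smul g x := g.left * φ g.right x
  one_smul x := show (1 : N) * φ 1 x = x by simp
  mul_smul g h x := show g.left * φ g.right h.left * φ (g.right * h.right) x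
      = g.left * φ g.right (h.left * φ h.right x) by simp [mul_assoc, MulAut.mul_apply]

@[simp]
theorem inl_smul (n x : N) : (inl n : N ⋊[φ] G) • x = n * x :=
  show n * φ 1 x = n * x by simp

@[simp]
theorem inr_smul (g : G) (x : N) : (inr g : N ⋊[φ] G) • x = φ g x :=
  show 1 * φ g x = φ g x from one_mul _

end SemidirectProduct

universe u

open Cardinal Pointwise in
/-- Mathlib's ping-pong lemma is stated for `CoprodI`; `H₁ ∗ H₂` embeds into the coproduct of the
`Bool`-indexed family `cond b H₁ H₂`. -/
theorem Monoid.Coprod.lift_injective_of_ping_pong {G α : Type*} {H₁ H₂ : Type u}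
    [Group G] [Group H₁] [Group H₂] [MulAction G α] (f₁ : H₁ →* G) (f₂ : H₂ →* G)
    (hcard : 3 ≤ #H₁ ∨ 3 ≤ #H₂) (X₁ X₂ : Set α) (hX₁ : X₁.Nonempty) (hX₂ : X₂.Nonempty)
    (hdisj : Disjoint X₁ X₂) (h₁ : ∀ h : H₁, h ≠ 1 → f₁ h • X₂ ⊆ X₁)
    (h₂ : ∀ h : H₂, h ≠ 1 → f₂ h • X₁ ⊆ X₂) :
    Function.Injective (Coprod.lift f₁ f₂) := by
  let _ : ∀ b, Group (cond b H₁ H₂) := fun b => b.casesOn ‹_› ‹_›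
  let f (b : Bool) : cond b H₁ H₂ →* G := b.casesOn f₂ f₁
  let toI : Coprod H₁ H₂ →* CoprodI fun b => cond b H₁ H₂ :=
    Coprod.lift (CoprodI.of (M := fun b => cond b H₁ H₂) (i := true))
      (CoprodI.of (M := fun b => cond b H₁ H₂) (i := false))
  let ofI : (CoprodI fun b => cond b H₁ H₂) →* Coprod H₁ H₂ :=
    CoprodI.lift fun b => b.casesOn Coprod.inr Coprod.inl
  have hleft : ofI.comp toI = MonoidHom.id _ :=
    Coprod.hom_ext (by ext; simp [toI, ofI, CoprodI.lift_of])
      (by ext; simp [toI, ofI, CoprodI.lift_of])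
  have hfactor : (CoprodI.lift f).comp toI = Coprod.lift f₁ f₂ :=
    Coprod.hom_ext (by ext; simp [toI, f, CoprodI.lift_of])
      (by ext; simp [toI, f, CoprodI.lift_of])
  rw [← hfactor, MonoidHom.coe_comp]
  refine (CoprodI.lift_injective_of_ping_pong f ?_ (fun b => cond b X₁ X₂) ?_ ?_ ?_).comp
    (Function.LeftInverse.injective (DFunLike.congr_fun hleft))
  · exact Or.inr (hcard.elim (⟨true, ·⟩) (⟨false, ·⟩))
  · rintro (_ | _)
    exacts [hX₂, hX₁]
  · rintro (_ | _) (_ | _) hij <;> simp at hij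
    exacts [hdisj.symm, hdisj]
  · rintro (_ | _) (_ | _) hij <;> simp at hij
    exacts [h₂, h₁]

open FreeGroup

theorem permAut_apply (n : ℕ) (σ : Equiv.Perm (Fin n)) (x : FreeGroup (Fin n)) :
    permAut n σ x = map σ x := rfl

def genWord (n : ℕ) : List (Fin n × Bool) := List.ofFn fun i => (i, true)

section

variable {n : ℕ}

theorem gWord_eq_mk_pow : gWord n = mk (genWord n) ^ 3 := by
  rw [gWord, ← lift_of_apply (mk _), lift_mk]
  simp [genWord, List.map_ofFn, Function.comp_def]

theorem isCyclicallyReduced_genWord : IsCyclicallyReduced (genWord n) :=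
  isCyclicallyReduced_of_forall_snd_eq (b := true) (by simp [genWord])

theorem toWord_mk_genWord : (mk (genWord n)).toWord = genWord n := by
  rw [toWord_mk, isCyclicallyReduced_genWord.isReduced.reduce_eq]

theorem map_genWord_ne_self {σ : Equiv.Perm (Fin n)} (hσ : σ ≠ 1) :
    (genWord n).map (fun p => (σ p.1, p.2)) ≠ genWord n := by
  intro h
  simp only [genWord, List.map_ofFn, List.ofFn_inj, Function.comp_def] at h
  exact hσ (Equiv.ext fun i => (Prod.ext_iff.1 (congrFun h i)).1)

theorem map_genWord_ne_invRev (hn : n ≠ 0) (σ : Equiv.Perm (Fin n)) :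
    (genWord n).map (fun p => (σ p.1, p.2)) ≠ invRev (genWord n) := by
  intro h
  simpa [genWord, List.map_ofFn, Function.comp_def, invRev, hn] using
    congrArg (List.map Prod.snd) h

def pingPongSet (n : ℕ) : Set (FreeGroup (Fin n)) :=
  {x | genWord n <+: x.toWord ∨ invRev (genWord n) <+: x.toWord}

theorem mem_pingPongSet_iff {x : FreeGroup (Fin n)} :
    x ∈ pingPongSet n ↔ x.toWord.take n = genWord n ∨ x.toWord.take n = invRev (genWord n) := by
  simp [pingPongSet, List.prefix_iff_eq_take, genWord, invRev_length, eq_comm]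

theorem one_notMem_pingPongSet (hn : n ≠ 0) : 1 ∉ pingPongSet n := by
  simp [pingPongSet, genWord, invRev, hn]

theorem mk_genWord_mem_pingPongSet : mk (genWord n) ∈ pingPongSet n :=
  Or.inl (by rw [toWord_mk_genWord])

theorem gWord_zpow_mul_mem_pingPongSet {k : ℤ} (hk : k ≠ 0) {x : FreeGroup (Fin n)}
    (hx : x ∉ pingPongSet n) : gWord n ^ k * x ∈ pingPongSet n := by
  rw [pingPongSet, Set.mem_ofPred_eq, not_or] at hx
  have hk3 : 2 ≤ |(3 : ℤ) * k| := by
    rw [abs_mul, abs_of_pos three_pos]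
    linarith [Int.one_le_abs hk]
  have h := prefix_toWord_zpow_mul (x := x)
    (by rw [toWord_mk_genWord]; exact isCyclicallyReduced_genWord) hk3
    (by rw [toWord_mk_genWord]; exact hx.1) (by rw [toWord_mk_genWord]; exact hx.2)
  rwa [toWord_mk_genWord, zpow_mul, zpow_ofNat, ← gWord_eq_mk_pow] at h

theorem map_notMem_pingPongSet (hn : n ≠ 0) {σ : Equiv.Perm (Fin n)} (hσ : σ ≠ 1)
    {x : FreeGroup (Fin n)} (hx : x ∈ pingPongSet n) : map σ x ∉ pingPongSet n := by
  rw [mem_pingPongSet_iff] at hx ⊢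
  rw [toWord_map σ.injective, ← List.map_take]
  rcases hx with h | h <;> rw [h]
  · exact not_or.2 ⟨map_genWord_ne_self hσ, map_genWord_ne_invRev hn σ⟩
  · rw [← invRev_map]
    exact not_or.2
      ⟨fun h' => map_genWord_ne_invRev hn σ (invRev_injective (by rwa [invRev_invRev])),
        fun h' => map_genWord_ne_self hσ (invRev_injective h')⟩

end

open Monoid in
/-- The homomorphism from the free product `ℤ ∗ Sₙ` to the semidirect product
`F ⋊[α] Sₙ` sending the generator `1` of `ℤ` to `(g, 1)` and each `σ ∈ Sₙ` to `(1, σ)`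
is injective; in particular the cyclic subgroup generated by `g` and the subgroup `Sₙ`
are free in `F ⋊[α] Sₙ`. -/
theorem zpowers_free_perm (n : ℕ) (hn : 1 ≤ n) :
    Function.Injective
      (Coprod.lift
        (zpowersHom (FreeGroup (Fin n) ⋊[permAut n] Equiv.Perm (Fin n))
          (SemidirectProduct.inl (gWord n)))
        (SemidirectProduct.inr (φ := permAut n))) := by
  have hn₀ : n ≠ 0 := Nat.one_le_iff_ne_zero.mp hn
  refine Coprod.lift_injective_of_ping_pong _ _ (Or.inl (by simp)) (pingPongSet n)
    (pingPongSet n)ᶜ ⟨_, mk_genWord_mem_pingPongSet⟩ ⟨1, one_notMem_pingPongSet hn₀⟩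
    disjoint_compl_right ?_ ?_
  · intro k hk
    rw [Set.smul_set_subset_iff]
    intro x hx
    rw [zpowersHom_apply, ← map_zpow, SemidirectProduct.inl_smul]
    exact gWord_zpow_mul_mem_pingPongSet (toAdd_eq_zero.not.mpr hk) hx
  · intro σ hσ
    rw [Set.smul_set_subset_iff]
    intro x hx
    rw [SemidirectProduct.inr_smul, permAut_apply]
    exact map_notMem_pingPongSet hn₀ hσ hx
end
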